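/- Let ℓ ≥ 2 and k ≥ 2, and let i be a position with i ≠ 0. Then the set Σ_i = {v ∈ V(ST^ℓ_k) : v i = v 0} is an efficient dominating (ℓ−1)-set of ST^ℓ_k: every vertex v with v i ≠ v 0 has exactly ℓ−1 neighbors lying in Σ_i. -/
import Mathlib


/-- An ℓ-set permutation: a string of length `k * l` over the alphabet `Fin k`
in which every symbol occurs exactly `l` times. -/
abbrev LSetPerm (k l : ℕ) : Type :=
  {v : Fin (k * l) → Fin k // ∀ j : Fin k, (Finset.univ.filter fun x => v x = j).card = l}

/-- The star ℓ-set transposition graph `ST^ℓ_k`: vertices are the ℓ-set permutations,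
with `v` adjacent to `w` iff `w` is obtained from `v` by transposing the first entry
with an entry of differing value. -/
def STGraph (k l : ℕ) [NeZero (k * l)] : SimpleGraph (LSetPerm k l) :=
  SimpleGraph.fromRel fun v w =>
    ∃ h : Fin (k * l), h ≠ 0 ∧ v.1 h ≠ v.1 0 ∧ w.1 = v.1 ∘ (Equiv.swap 0 h)

lemma comp_perm_count {n k : ℕ} (v : Fin n → Fin k) (e : Equiv.Perm (Fin n)) (j : Fin k) :
    (Finset.univ.filter fun x => (v ∘ e) x = j).card
      = (Finset.univ.filter fun x => v x = j).card := by
  apply Finset.card_equiv e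
  intro a
  simp

/-- for `ℓ ≥ 2` and a position `i ≠ 0`, the set `Σ_i = {v : v i = v 0}`
is an efficient dominating `(ℓ-1)`-set of `ST^ℓ_k`: every vertex `v` with `v i ≠ v 0`
has exactly `ℓ-1` neighbors in `Σ_i`. -/
theorem ST_Sigma_efficientDominating (k l : ℕ) (hl : 2 ≤ l) (hk : 2 ≤ k) :
    letI : NeZero (k * l) := ⟨Nat.mul_ne_zero (by omega) (by omega)⟩
    ∀ i : Fin (k * l), i ≠ 0 → ∀ v : LSetPerm k l, v.1 i ≠ v.1 0 →
      {w : LSetPerm k l | (STGraph k l).Adj v w ∧ w.1 i = w.1 0}.ncard = l - 1 := by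
  haveI : NeZero (k * l) := ⟨Nat.mul_ne_zero (by omega) (by omega)⟩
  intro i hi v hvi
  classical
  set f : Fin (k * l) → LSetPerm k l := fun h =>
    ⟨v.1 ∘ (Equiv.swap 0 h), fun j => by rw [comp_perm_count]; exact v.2 j⟩ with hf
  have hset : {w : LSetPerm k l | (STGraph k l).Adj v w ∧ w.1 i = w.1 0}
      = f '' {h | h ≠ 0 ∧ h ≠ i ∧ v.1 h = v.1 i} := by
    ext w
    simp only [Set.mem_setOf_eq, Set.mem_image, STGraph, SimpleGraph.fromRel_adj]
    constructor
    · rintro ⟨⟨hne, hrel⟩, hwi⟩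
      -- reduce to a single relation form
      have key : ∃ h : Fin (k * l), h ≠ 0 ∧ v.1 h ≠ v.1 0 ∧ w.1 = v.1 ∘ (Equiv.swap 0 h) := by
        rcases hrel with ⟨h, h0, hv, he⟩ | ⟨h, h0, hw, he⟩
        · exact ⟨h, h0, hv, he⟩
        · refine ⟨h, h0, ?_, ?_⟩
          · have h1 : v.1 h = w.1 0 := by
              rw [he]; simp
            have h2 : v.1 0 = w.1 h := by
              rw [he]; simp
            rw [h1, h2]; exact fun hh => hw hh.symm
          · rw [he]
            ext x
            simp
      rcases key with ⟨h, h0, hv0, he⟩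
      have hhi : h ≠ i := by
        rintro rfl
        apply hvi
        have h1 : w.1 h = v.1 0 := by rw [he]; simp
        have h2 : w.1 0 = v.1 h := by rw [he]; simp
        rw [← h1, ← h2, hwi]
      refine ⟨h, ⟨h0, hhi, ?_⟩, ?_⟩
      · have h1 : w.1 i = v.1 i := by
          rw [he]; simp [Function.comp, Equiv.swap_apply_of_ne_of_ne hi hhi.symm]
        have h2 : w.1 0 = v.1 h := by rw [he]; simp
        rw [← h1, ← h2, hwi]
      · apply Subtype.ext
        rw [he]
    · rintro ⟨h, ⟨h0, hhi, hvh⟩, rfl⟩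
      have hv0 : v.1 h ≠ v.1 0 := by rw [hvh]; exact hvi
      have hw0 : (f h).1 0 = v.1 h := by simp [hf]
      refine ⟨⟨?_, Or.inl ⟨h, h0, hv0, rfl⟩⟩, ?_⟩
      · intro hvw
        apply hv0
        rw [← hw0, ← hvw]
      · have h1 : (f h).1 i = v.1 i := by
          simp [hf, Equiv.swap_apply_of_ne_of_ne hi (Ne.symm hhi)]
        rw [h1, hw0, hvh]
  rw [hset]
  have hinj : Set.InjOn f {h | h ≠ 0 ∧ h ≠ i ∧ v.1 h = v.1 i} := by
    rintro a ⟨ha0, hai, hva⟩ b ⟨hb0, hbi, hvb⟩ hab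
    by_contra hne
    have h1 : (f a).1 a = v.1 0 := by simp [hf]
    have h2 : (f b).1 a = v.1 a := by
      simp [hf, Equiv.swap_apply_of_ne_of_ne ha0 hne]
    rw [hab] at h1
    rw [h1] at h2
    rw [hva] at h2
    exact hvi h2.symm
  rw [Set.ncard_image_of_injOn hinj]
  have hcoe : {h : Fin (k * l) | h ≠ 0 ∧ h ≠ i ∧ v.1 h = v.1 i}
      = ↑((Finset.univ.filter fun h => v.1 h = v.1 i).erase i) := by
    ext h
    simp only [Set.mem_setOf_eq, Finset.coe_erase, Set.mem_diff, Finset.mem_coe,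
      Finset.mem_filter, Finset.mem_univ, true_and, Set.mem_singleton_iff]
    constructor
    · rintro ⟨_, hhi, hvh⟩; exact ⟨hvh, hhi⟩
    · rintro ⟨hvh, hhi⟩
      refine ⟨?_, hhi, hvh⟩
      rintro rfl
      exact hvi (hvh.symm)
  rw [hcoe, Set.ncard_coe_finset, Finset.card_erase_of_mem (by simp), v.2 (v.1 i)]
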